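/- arXiv:math/9912180 — 4 statements merged into one kernel-verified Lean document; each statement's English description precedes it below -/
import Mathlib

section
/- Let G be a topological group and H a compact normal subgroup of G, and let ρ: H → GL(n, ℂ) be a continuous irreducible representation that is G-invariant. Then there exists a continuous group homomorphism ρ*: G → PGL(n, ℂ) (the projective representation of G associated with ρ) such that: (1) for every g ∈ G and every matrix M ∈ GL(n, ℂ) whose class in PGL(n, ℂ) equals ρ*(g), one has M⁻¹ ρ(h) M = ρ(g⁻¹ h g) for all h ∈ H; in particular (2) ρ*(h) = π(ρ(h)) for all h ∈ H, where π: GL(n, ℂ) → PGL(n, ℂ) is the canonical projection. Moreover, if ρ takes values in the unitary group U(n), then the image of ρ* is contained in U(n)/S¹ ⊂ PGL(n, ℂ). -/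
/-- The central subgroup `ℂ*` of nonzero scalar matrices in `GL(n, ℂ)`,
so that `PGL(n, ℂ) = GL(n, ℂ) ⧸ scalarSubgroup n`. -/
def scalarSubgroup (n : ℕ) : Subgroup (GL (Fin n) ℂ) :=
  (Units.map (Matrix.scalar (Fin n)).toMonoidHom : ℂˣ →* GL (Fin n) ℂ).range

instance (n : ℕ) : (scalarSubgroup n).Normal := by
  constructor
  rintro x ⟨z, rfl⟩ g
  refine ⟨z, Units.ext ?_⟩
  simp only [Units.coe_map, Units.val_mul, RingHom.toMonoidHom_eq_coe, MonoidHom.coe_coe]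
  have hc : Commute ((Matrix.scalar (Fin n)) (z : ℂ)) (g : Matrix (Fin n) (Fin n) ℂ) :=
    Matrix.scalar_commute _ (fun r => Commute.all _ r) _
  symm
  calc (g : Matrix (Fin n) (Fin n) ℂ) * (Matrix.scalar (Fin n)) (z : ℂ) *
        ((g⁻¹ : GL (Fin n) ℂ) : Matrix (Fin n) (Fin n) ℂ)
      = (Matrix.scalar (Fin n)) (z : ℂ) *
        ((g : Matrix (Fin n) (Fin n) ℂ) * ((g⁻¹ : GL (Fin n) ℂ) : Matrix (Fin n) (Fin n) ℂ)) := by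
        rw [← hc.eq, mul_assoc]
    _ = (Matrix.scalar (Fin n)) (z : ℂ) := by
        rw [← Units.val_mul, mul_inv_cancel, Units.val_one, mul_one]

namespace AuxPRL

open Matrix

variable {G : Type*} [Group G] {n : ℕ} {H : Subgroup G}

local notation "𝕄" => Matrix (Fin n) (Fin n) ℂ

/-- coe from GL to matrices is an open map. -/
theorem isOpenMap_val : IsOpenMap (fun A : GL (Fin n) ℂ => (A : 𝕄)) := by
  have hset : {X : 𝕄 | IsUnit X} = (fun X : 𝕄 => X.det) ⁻¹' {z | z ≠ 0} := by
    ext X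
    simp [Matrix.isUnit_iff_isUnit_det, isUnit_iff_ne_zero]
  have hdet : Continuous fun X : 𝕄 => X.det := continuous_id.matrix_det
  have hopen : IsOpen {X : 𝕄 | IsUnit X} := by
    rw [hset]
    exact isOpen_ne.preimage hdet
  have hcont : ContinuousOn (fun X : 𝕄 => Ring.inverse X) {X : 𝕄 | IsUnit X} := by
    have heq : ∀ X : 𝕄, Ring.inverse X = (X.det)⁻¹ • X.adjugate := by
      intro X
      rw [← Matrix.nonsing_inv_eq_ringInverse, Matrix.inv_def, Ring.inverse_eq_inv']
    simp only [heq]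
    refine ContinuousOn.fun_smul ?_ (continuous_id.matrix_adjugate.continuousOn)
    refine ContinuousOn.inv₀ hdet.continuousOn ?_
    intro X hX
    rw [hset] at hX
    exact hX
  have hemb : Topology.IsEmbedding (fun A : GL (Fin n) ℂ => (A : 𝕄)) :=
    Units.isEmbedding_val_mk' hcont (fun u => Ring.inverse_unit u)
  have hrange : Set.range (fun A : GL (Fin n) ℂ => (A : 𝕄)) = {X : 𝕄 | IsUnit X} := by
    ext X
    constructor
    · rintro ⟨u, rfl⟩; exact u.isUnit
    · intro hX; exact ⟨hX.unit, rfl⟩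
  exact Topology.IsOpenEmbedding.isOpenMap ⟨hemb, hrange ▸ hopen⟩

/-- Schur: a matrix commuting with all `ρ h` is scalar. -/
theorem schur (ρ : H →* GL (Fin n) ℂ)
    (hirr : ∀ W : Submodule ℂ (Fin n → ℂ),
      (∀ (h : H), ∀ v ∈ W, (ρ h : 𝕄).mulVec v ∈ W) → W = ⊥ ∨ W = ⊤)
    (npos : 0 < n) (S : 𝕄)
    (hS : ∀ h : H, (ρ h : 𝕄) * S = S * (ρ h : 𝕄)) :
    ∃ c : ℂ, S = c • (1 : 𝕄) := by
  haveI : Nonempty (Fin n) := ⟨⟨0, npos⟩⟩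
  set f : Module.End ℂ (Fin n → ℂ) := Matrix.toLin' S with hf
  obtain ⟨c, hc⟩ := Module.End.exists_eigenvalue f
  refine ⟨c, ?_⟩
  have hinv : ∀ (h : H), ∀ v ∈ f.eigenspace c, (ρ h : 𝕄).mulVec v ∈ f.eigenspace c := by
    intro h v hv
    rw [Module.End.mem_eigenspace_iff] at hv ⊢
    rw [hf, Matrix.toLin'_apply] at hv ⊢
    rw [Matrix.mulVec_mulVec, ← hS h, ← Matrix.mulVec_mulVec, hv, Matrix.mulVec_smul]
  rcases hirr _ hinv with h0 | htop
  · exact absurd h0 hc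
  · apply Matrix.toLin'.injective
    apply LinearMap.ext
    intro v
    have hv : v ∈ f.eigenspace c := htop ▸ Submodule.mem_top
    rw [Module.End.mem_eigenspace_iff] at hv
    rw [← hf, hv, Matrix.toLin'_apply, Matrix.smul_mulVec, Matrix.one_mulVec]

/-- A nonzero matrix intertwining `ρ` with another representation-like family is invertible. -/
theorem intertwiner_isUnit (ρ : H →* GL (Fin n) ℂ)
    (hirr : ∀ W : Submodule ℂ (Fin n → ℂ),
      (∀ (h : H), ∀ v ∈ W, (ρ h : 𝕄).mulVec v ∈ W) → W = ⊥ ∨ W = ⊤)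
    (B : H → 𝕄) (X : 𝕄) (hX : X ≠ 0)
    (hI : ∀ h : H, (ρ h : 𝕄) * X = X * B h) : IsUnit X := by
  have hinv : ∀ (h : H), ∀ v ∈ LinearMap.range (Matrix.toLin' X),
      (ρ h : 𝕄).mulVec v ∈ LinearMap.range (Matrix.toLin' X) := by
    rintro h v ⟨w, rfl⟩
    refine ⟨(B h).mulVec w, ?_⟩
    rw [Matrix.toLin'_apply, Matrix.toLin'_apply, Matrix.mulVec_mulVec,
      Matrix.mulVec_mulVec, hI h]
  rcases hirr _ hinv with h0 | htop
  · exfalso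
    apply hX
    apply Matrix.toLin'.injective
    apply LinearMap.ext
    intro v
    have : Matrix.toLin' X v ∈ LinearMap.range (Matrix.toLin' X) := ⟨v, rfl⟩
    rw [h0] at this
    simpa using this
  · have hsurj : Function.Surjective (Matrix.toLin' X) :=
      LinearMap.range_eq_top.mp htop
    have hbij : Function.Bijective (Matrix.toLin' X) :=
      ⟨LinearMap.injective_iff_surjective.mpr hsurj, hsurj⟩
    set e := LinearEquiv.ofBijective (Matrix.toLin' X) hbij with he
    set Y : 𝕄 := Matrix.toLin'.symm (e.symm : (Fin n → ℂ) →ₗ[ℂ] (Fin n → ℂ)) with hY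
    have hXY : X * Y = 1 := by
      apply Matrix.toLin'.injective
      rw [Matrix.toLin'_mul, Matrix.toLin'_one, hY, LinearEquiv.apply_symm_apply]
      apply LinearMap.ext
      intro v
      simp only [LinearMap.comp_apply, LinearMap.id_apply, LinearEquiv.coe_coe]
      have : (Matrix.toLin' X) (e.symm v) = e (e.symm v) := rfl
      rw [this, e.apply_symm_apply]
    exact ⟨⟨X, Y, hXY, mul_eq_one_comm.mp hXY⟩, rfl⟩


theorem scalar_central (w : GL (Fin n) ℂ) (hw : w ∈ scalarSubgroup n)
    (A : GL (Fin n) ℂ) : w * A = A * w := by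
  obtain ⟨z, rfl⟩ := hw
  refine Units.ext ?_
  simp only [Units.val_mul, Units.coe_map, RingHom.toMonoidHom_eq_coe, MonoidHom.coe_coe]
  exact (Matrix.scalar_commute (z : ℂ) (fun r => Commute.all _ r) (A : 𝕄)).eq

theorem one_ne_zero_M (npos : 0 < n) : (1 : 𝕄) ≠ 0 := by
  intro h
  have := congrFun (congrFun h ⟨0, npos⟩) ⟨0, npos⟩
  rw [Matrix.one_apply_eq] at this
  simp only [Matrix.zero_apply] at this
  exact one_ne_zero this

theorem coset_eq (ρ : H →* GL (Fin n) ℂ)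
    (hirr : ∀ W : Submodule ℂ (Fin n → ℂ),
      (∀ (h : H), ∀ v ∈ W, (ρ h : 𝕄).mulVec v ∈ W) → W = ⊥ ∨ W = ⊤)
    (npos : 0 < n) (B : H → 𝕄) (M N : GL (Fin n) ℂ)
    (hM : ∀ h : H, (ρ h : 𝕄) * (M : 𝕄) = (M : 𝕄) * B h)
    (hNN : ∀ h : H, (ρ h : 𝕄) * (N : 𝕄) = (N : 𝕄) * B h) :
    QuotientGroup.mk' (scalarSubgroup n) N = QuotientGroup.mk' (scalarSubgroup n) M := by
  have haa' : (M : 𝕄) * ((M⁻¹ : GL (Fin n) ℂ) : 𝕄) = 1 := by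
    rw [← Units.val_mul, mul_inv_cancel, Units.val_one]
  have ha'a : ((M⁻¹ : GL (Fin n) ℂ) : 𝕄) * (M : 𝕄) = 1 := by
    rw [← Units.val_mul, inv_mul_cancel, Units.val_one]
  have hcomm : ∀ h : H, (ρ h : 𝕄) * ((N * M⁻¹ : GL (Fin n) ℂ) : 𝕄)
      = ((N * M⁻¹ : GL (Fin n) ℂ) : 𝕄) * (ρ h : 𝕄) := by
    intro h
    have h1 : B h * ((M⁻¹ : GL (Fin n) ℂ) : 𝕄) = ((M⁻¹ : GL (Fin n) ℂ) : 𝕄) * (ρ h : 𝕄) := by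
      calc B h * ((M⁻¹ : GL (Fin n) ℂ) : 𝕄)
          = (((M⁻¹ : GL (Fin n) ℂ) : 𝕄) * (M : 𝕄)) * (B h * ((M⁻¹ : GL (Fin n) ℂ) : 𝕄)) := by
            rw [ha'a, one_mul]
        _ = ((M⁻¹ : GL (Fin n) ℂ) : 𝕄) * (((M : 𝕄) * B h) * ((M⁻¹ : GL (Fin n) ℂ) : 𝕄)) := by
            rw [mul_assoc, mul_assoc]
        _ = ((M⁻¹ : GL (Fin n) ℂ) : 𝕄) * (((ρ h : 𝕄) * (M : 𝕄)) * ((M⁻¹ : GL (Fin n) ℂ) : 𝕄)) := by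
            rw [← hM h]
        _ = ((M⁻¹ : GL (Fin n) ℂ) : 𝕄) * ((ρ h : 𝕄) * ((M : 𝕄) * ((M⁻¹ : GL (Fin n) ℂ) : 𝕄))) := by
            rw [mul_assoc]
        _ = ((M⁻¹ : GL (Fin n) ℂ) : 𝕄) * (ρ h : 𝕄) := by rw [haa', mul_one]
    calc (ρ h : 𝕄) * ((N * M⁻¹ : GL (Fin n) ℂ) : 𝕄)
        = ((ρ h : 𝕄) * (N : 𝕄)) * ((M⁻¹ : GL (Fin n) ℂ) : 𝕄) := by
          rw [Units.val_mul, mul_assoc]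
      _ = (N : 𝕄) * (B h * ((M⁻¹ : GL (Fin n) ℂ) : 𝕄)) := by rw [hNN h, mul_assoc]
      _ = (N : 𝕄) * (((M⁻¹ : GL (Fin n) ℂ) : 𝕄) * (ρ h : 𝕄)) := by rw [h1]
      _ = ((N * M⁻¹ : GL (Fin n) ℂ) : 𝕄) * (ρ h : 𝕄) := by rw [Units.val_mul, mul_assoc]
  obtain ⟨c, hc⟩ := schur ρ hirr npos _ hcomm
  have hc0 : c ≠ 0 := by
    intro h0
    rw [h0, zero_smul] at hc
    have h1 : ((N * M⁻¹ : GL (Fin n) ℂ) : 𝕄) * (((N * M⁻¹)⁻¹ : GL (Fin n) ℂ) : 𝕄) = 1 := by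
      rw [← Units.val_mul, mul_inv_cancel, Units.val_one]
    rw [hc, zero_mul] at h1
    exact one_ne_zero_M npos h1.symm
  have hmem : N * M⁻¹ ∈ scalarSubgroup n := by
    refine ⟨Units.mk0 c hc0, ?_⟩
    refine Units.ext ?_
    simp only [Units.coe_map, RingHom.toMonoidHom_eq_coe, MonoidHom.coe_coe, Units.val_mk0]
    rw [Matrix.scalar_apply, ← Matrix.smul_one_eq_diagonal, hc]
  have hmem2 : N⁻¹ * M ∈ scalarSubgroup n := by
    have hwinv : (N * M⁻¹)⁻¹ ∈ scalarSubgroup n := (scalarSubgroup n).inv_mem hmem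
    have hcentral := scalar_central _ hwinv N⁻¹
    have : N⁻¹ * M = N⁻¹ * ((N * M⁻¹)⁻¹ * N) := by group
    rw [this, ← mul_assoc, ← hcentral, mul_assoc, inv_mul_cancel, mul_one]
    exact hwinv
  simp only [QuotientGroup.mk'_apply]
  exact (QuotientGroup.eq ).mpr hmem2

/-- The conjugated element of `H`. -/
def conjH (H : Subgroup G) [hN : H.Normal] (g : G) (h : H) : H :=
  ⟨g⁻¹ * (h : G) * g, hN.conj_mem' (h : G) h.2 g⟩

theorem conjH_mul [hN : H.Normal] (g g' : G) (h : H) :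
    conjH H (g * g') h = conjH H g' (conjH H g h) := by
  apply Subtype.ext
  show (g * g')⁻¹ * (h : G) * (g * g') = g'⁻¹ * (g⁻¹ * (h : G) * g) * g'
  group

theorem conjH_inv [hN : H.Normal] (g : G) (h : H) :
    conjH H g h⁻¹ = (conjH H g h)⁻¹ := by
  apply Subtype.ext
  show g⁻¹ * ((h : G))⁻¹ * g = (g⁻¹ * (h : G) * g)⁻¹
  group

theorem itw_iff [hN : H.Normal] (ρ : H →* GL (Fin n) ℂ) (g : G) (M : GL (Fin n) ℂ) :
    (∀ h : H, M⁻¹ * ρ h * M = ρ (conjH H g h)) ↔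
    (∀ h : H, (ρ h : 𝕄) * (M : 𝕄) = (M : 𝕄) * (ρ (conjH H g h) : 𝕄)) := by
  constructor
  · intro hr h
    have h2 : ρ h * M = M * ρ (conjH H g h) := by
      rw [← hr h]; group
    have := congrArg Units.val h2
    simpa [Units.val_mul] using this
  · intro hr h
    apply Units.ext
    have ha'a : ((M⁻¹ : GL (Fin n) ℂ) : 𝕄) * (M : 𝕄) = 1 := by
      rw [← Units.val_mul, inv_mul_cancel, Units.val_one]
    calc ((M⁻¹ * ρ h * M : GL (Fin n) ℂ) : 𝕄)
        = ((M⁻¹ : GL (Fin n) ℂ) : 𝕄) * ((ρ h : 𝕄) * (M : 𝕄)) := by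
          rw [Units.val_mul, Units.val_mul, mul_assoc]
      _ = ((M⁻¹ : GL (Fin n) ℂ) : 𝕄) * ((M : 𝕄) * (ρ (conjH H g h) : 𝕄)) := by rw [hr h]
      _ = (ρ (conjH H g h) : 𝕄) := by rw [← mul_assoc, ha'a, one_mul]

theorem unitary_rep [hN : H.Normal] (ρ : H →* GL (Fin n) ℂ)
    (hirr : ∀ W : Submodule ℂ (Fin n → ℂ),
      (∀ (h : H), ∀ v ∈ W, (ρ h : 𝕄).mulVec v ∈ W) → W = ⊥ ∨ W = ⊤)
    (npos : 0 < n)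
    (hu : ∀ h : H, (ρ h : 𝕄) ∈ Matrix.unitaryGroup (Fin n) ℂ)
    (g : G) (M : GL (Fin n) ℂ)
    (hM : ∀ h : H, (ρ h : 𝕄) * (M : 𝕄) = (M : 𝕄) * (ρ (conjH H g h) : 𝕄)) :
    ∃ M' : GL (Fin n) ℂ, (M' : 𝕄) ∈ Matrix.unitaryGroup (Fin n) ℂ ∧
      QuotientGroup.mk' (scalarSubgroup n) M' = QuotientGroup.mk' (scalarSubgroup n) M := by
  set a : 𝕄 := (M : 𝕄) with ha
  set a' : 𝕄 := ((M⁻¹ : GL (Fin n) ℂ) : 𝕄) with ha'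
  have haa' : a * a' = 1 := by rw [ha, ha', ← Units.val_mul, mul_inv_cancel, Units.val_one]
  have ha'a : a' * a = 1 := by rw [ha, ha', ← Units.val_mul, inv_mul_cancel, Units.val_one]
  have hstar : ∀ h : H, star (ρ h : 𝕄) = (((ρ h)⁻¹ : GL (Fin n) ℂ) : 𝕄) := by
    intro h
    have h1 : star (ρ h : 𝕄) * (ρ h : 𝕄) = 1 := Matrix.mem_unitaryGroup_iff'.mp (hu h)
    have h2 : (ρ h : 𝕄) * (((ρ h)⁻¹ : GL (Fin n) ℂ) : 𝕄) = 1 := by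
      rw [← Units.val_mul, mul_inv_cancel, Units.val_one]
    calc star (ρ h : 𝕄)
        = star (ρ h : 𝕄) * ((ρ h : 𝕄) * (((ρ h)⁻¹ : GL (Fin n) ℂ) : 𝕄)) := by
          rw [h2, mul_one]
      _ = (star (ρ h : 𝕄) * (ρ h : 𝕄)) * (((ρ h)⁻¹ : GL (Fin n) ℂ) : 𝕄) := by
          rw [mul_assoc]
      _ = (((ρ h)⁻¹ : GL (Fin n) ℂ) : 𝕄) := by rw [h1, one_mul]
  have hMinv : ∀ h : H, (((ρ h)⁻¹ : GL (Fin n) ℂ) : 𝕄) * a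
      = a * (((ρ (conjH H g h))⁻¹ : GL (Fin n) ℂ) : 𝕄) := by
    intro h
    have h4 := hM h⁻¹
    rwa [conjH_inv, map_inv, map_inv] at h4
  have hstarrel : ∀ h : H, star a * (((ρ h)⁻¹ : GL (Fin n) ℂ) : 𝕄)
      = (((ρ (conjH H g h))⁻¹ : GL (Fin n) ℂ) : 𝕄) * star a := by
    intro h
    have h5 := congrArg star (hM h)
    rw [StarMul.star_mul, StarMul.star_mul, hstar h, hstar (conjH H g h)] at h5
    exact h5
  have hcomm : ∀ h : H, (ρ h : 𝕄) * (a * star a) = (a * star a) * (ρ h : 𝕄) := by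
    intro h
    have key : ∀ k : H, (((ρ k)⁻¹ : GL (Fin n) ℂ) : 𝕄) * (a * star a)
        = (a * star a) * (((ρ k)⁻¹ : GL (Fin n) ℂ) : 𝕄) := by
      intro k
      calc (((ρ k)⁻¹ : GL (Fin n) ℂ) : 𝕄) * (a * star a)
          = ((((ρ k)⁻¹ : GL (Fin n) ℂ) : 𝕄) * a) * star a := by rw [mul_assoc]
        _ = (a * (((ρ (conjH H g k))⁻¹ : GL (Fin n) ℂ) : 𝕄)) * star a := by rw [hMinv k]
        _ = a * ((((ρ (conjH H g k))⁻¹ : GL (Fin n) ℂ) : 𝕄) * star a) := by rw [mul_assoc]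
        _ = a * (star a * (((ρ k)⁻¹ : GL (Fin n) ℂ) : 𝕄)) := by rw [← hstarrel k]
        _ = (a * star a) * (((ρ k)⁻¹ : GL (Fin n) ℂ) : 𝕄) := by rw [mul_assoc]
    have h6 := key h⁻¹
    rwa [map_inv, inv_inv] at h6
  obtain ⟨c, hc⟩ := schur ρ hirr npos _ hcomm
  set i0 : Fin n := ⟨0, npos⟩
  set s : ℝ := ∑ j, Complex.normSq (a i0 j) with hs
  have hcs : c = (s : ℂ) := by
    have h1 : (a * star a) i0 i0 = (s : ℂ) := by
      rw [Matrix.mul_apply, hs, Complex.ofReal_sum]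
      refine Finset.sum_congr rfl fun j _ => ?_
      rw [Matrix.star_apply, ← Complex.mul_conj]
      rfl
    have h2 : (a * star a) i0 i0 = c := by
      rw [hc, Matrix.smul_apply, Matrix.one_apply_eq, smul_eq_mul, mul_one]
    rw [← h1, h2]
  have hc0 : c ≠ 0 := by
    intro h0
    rw [h0, zero_smul] at hc
    have h1 : star a = a' * (a * star a) := by rw [← mul_assoc, ha'a, one_mul]
    rw [hc, mul_zero] at h1
    have h2 : a = 0 := by
      have h3 := congrArg star h1
      rwa [star_star, star_zero] at h3
    rw [h2, zero_mul] at haa'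
    exact one_ne_zero_M npos haa'.symm
  have hsne : s ≠ 0 := fun h => hc0 (by rw [hcs, h, Complex.ofReal_zero])
  have hs0 : 0 < s :=
    lt_of_le_of_ne (Finset.sum_nonneg fun j _ => Complex.normSq_nonneg _) (Ne.symm hsne)
  set t : ℝ := Real.sqrt s with hts
  have ht0 : 0 < t := Real.sqrt_pos.mpr hs0
  have htne : (t : ℂ) ≠ 0 := by exact_mod_cast ne_of_gt ht0
  have htc : ((t : ℂ))⁻¹ ≠ 0 := inv_ne_zero htne
  set z : ℂˣ := Units.mk0 ((t : ℂ))⁻¹ htc with hz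
  set M' : GL (Fin n) ℂ :=
    (Units.map (Matrix.scalar (Fin n)).toMonoidHom z) * M with hM'
  have hM'coe : (M' : 𝕄) = ((t : ℂ))⁻¹ • a := by
    rw [hM', Units.val_mul]
    simp only [Units.coe_map, RingHom.toMonoidHom_eq_coe, MonoidHom.coe_coe, Units.val_mk0, hz]
    rw [Matrix.scalar_apply, ← Matrix.smul_one_eq_diagonal, smul_mul_assoc, one_mul, ha]
  refine ⟨M', ?_, ?_⟩
  · rw [Matrix.mem_unitaryGroup_iff, hM'coe]
    rw [star_smul, smul_mul_assoc, mul_smul_comm, hc, smul_smul, smul_smul, hcs]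
    have hstart : star (((t : ℂ))⁻¹) = ((t : ℂ))⁻¹ := by
      rw [← Complex.ofReal_inv, Complex.star_def, Complex.conj_ofReal]
    rw [hstart]
    have hone : ((t : ℂ))⁻¹ * ((t : ℂ))⁻¹ * (s : ℂ) = 1 := by
      have hst : t * t = s := Real.mul_self_sqrt (le_of_lt hs0)
      rw [← hst]
      push_cast
      field_simp
    rw [hone, one_smul]
  · rw [hM', _root_.map_mul]
    have h1 : (QuotientGroup.mk' (scalarSubgroup n))
        (Units.map (Matrix.scalar (Fin n)).toMonoidHom z) = 1 := by
      rw [QuotientGroup.mk'_apply, QuotientGroup.eq_one_iff]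
      exact ⟨z, rfl⟩
    rw [h1, one_mul]

/-- An auxiliary "norm" on matrices: sum of absolute values of entries. -/
noncomputable def Nm (X : 𝕄) : ℝ := ∑ i, ∑ j, ‖X i j‖

theorem continuous_Nm : Continuous (Nm (n := n)) := by
  refine continuous_finset_sum _ fun i _ => continuous_finset_sum _ fun j _ => ?_
  exact continuous_norm.comp ((continuous_apply j).comp (continuous_apply i))

theorem Nm_nonneg (X : 𝕄) : 0 ≤ Nm X :=
  Finset.sum_nonneg fun i _ => Finset.sum_nonneg fun j _ => norm_nonneg _

theorem Nm_eq_zero {X : 𝕄} (h : Nm X = 0) : X = 0 := by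
  have h1 := (Finset.sum_eq_zero_iff_of_nonneg
    (fun i _ => Finset.sum_nonneg fun j _ => norm_nonneg _)).mp h
  ext i j
  have h2 := (Finset.sum_eq_zero_iff_of_nonneg
    (fun j _ => norm_nonneg _)).mp (h1 i (Finset.mem_univ i)) j (Finset.mem_univ j)
  simpa using norm_eq_zero.mp h2

theorem Nm_pos {X : 𝕄} (h : X ≠ 0) : 0 < Nm X :=
  lt_of_le_of_ne (Nm_nonneg X) fun h0 => h (Nm_eq_zero h0.symm)

theorem Nm_smul (z : ℂ) (X : 𝕄) : Nm (z • X) = ‖z‖ * Nm X := by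
  simp only [Nm, Matrix.smul_apply, smul_eq_mul, norm_mul, Finset.mul_sum]

theorem isCompact_sphereNm : IsCompact {X : 𝕄 | Nm X = 1} := by
  have hbox : IsCompact {X : 𝕄 | ∀ i j, ‖X i j‖ ≤ 1} := by
    have h1 : IsCompact (Set.univ.pi fun _ : Fin n =>
        (Set.univ.pi fun _ : Fin n => Metric.closedBall (0 : ℂ) 1)) :=
      isCompact_univ_pi fun _ => isCompact_univ_pi fun _ => isCompact_closedBall 0 1
    have h2 : {X : 𝕄 | ∀ i j, ‖X i j‖ ≤ 1} =
        (Set.univ.pi fun _ : Fin n => (Set.univ.pi fun _ : Fin n => Metric.closedBall (0:ℂ) 1)) := by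
      ext X
      refine Iff.trans ?_ (Set.mem_univ_pi (f := (X : Fin n → Fin n → ℂ))).symm
      constructor
      · intro hX i
        rw [Set.mem_univ_pi]
        intro j
        rw [Metric.mem_closedBall, dist_zero_right]
        exact hX i j
      · intro hX i j
        have h3 := hX i
        rw [Set.mem_univ_pi] at h3
        have h4 := h3 j
        rwa [Metric.mem_closedBall, dist_zero_right] at h4
    rw [h2]
    exact h1
  refine IsCompact.of_isClosed_subset hbox ?_ ?_
  · exact isClosed_eq continuous_Nm continuous_const
  · intro X hX i j
    have h1 : ‖X i j‖ ≤ ∑ j', ‖X i j'‖ :=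
      Finset.single_le_sum (fun j' _ => norm_nonneg _) (Finset.mem_univ j)
    have h2 : (∑ j', ‖X i j'‖) ≤ Nm X :=
      Finset.single_le_sum (f := fun i' => ∑ j', ‖X i' j'‖)
        (fun i' _ => Finset.sum_nonneg fun j' _ => norm_nonneg _) (Finset.mem_univ i)
    calc ‖X i j‖ ≤ _ := h1
      _ ≤ Nm X := h2
      _ = 1 := hX

end AuxPRL

/-- **Lemma 2.1.** Let `G` be a topological group and `H` a compact normal subgroup of
`G`.  Given a continuous irreducible representation `ρ : H → GL(n, ℂ)` which is
`G`-invariant, there is an associated continuous projective representation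
`ρ* : G → PGL(n, ℂ)` such that any representative matrix `M` of `ρ*(g)` intertwines
`ρ` and its conjugate `ᵍρ`; in particular `ρ* = π ∘ ρ` on `H`.  Moreover, if `ρ` is
unitary then the image of `ρ*` lies in `U(n)/S¹ ⊂ PGL(n, ℂ)`. -/
theorem associated_projective_representation
    {G : Type*} [Group G] [TopologicalSpace G] [IsTopologicalGroup G]
    (H : Subgroup G) [hN : H.Normal] (hHcpt : IsCompact (H : Set G))
    {n : ℕ} (ρ : H →* GL (Fin n) ℂ) (hρ : Continuous ρ)
    (hirr : ∀ W : Submodule ℂ (Fin n → ℂ),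
      (∀ (h : H), ∀ v ∈ W, (ρ h : Matrix (Fin n) (Fin n) ℂ).mulVec v ∈ W) → W = ⊥ ∨ W = ⊤)
    (hGinv : ∀ g : G, ∃ M : GL (Fin n) ℂ, ∀ h : H,
      M⁻¹ * ρ h * M = ρ ⟨g⁻¹ * (h : G) * g, hN.conj_mem' (h : G) h.2 g⟩) :
    ∃ ρs : G →* GL (Fin n) ℂ ⧸ scalarSubgroup n, Continuous ρs ∧
      (∀ (g : G) (M : GL (Fin n) ℂ), QuotientGroup.mk' (scalarSubgroup n) M = ρs g →
        ∀ h : H, M⁻¹ * ρ h * M = ρ ⟨g⁻¹ * (h : G) * g, hN.conj_mem' (h : G) h.2 g⟩) ∧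
      (∀ h : H, ρs (h : G) = QuotientGroup.mk' (scalarSubgroup n) (ρ h)) ∧
      ((∀ h : H, (ρ h : Matrix (Fin n) (Fin n) ℂ) ∈ Matrix.unitaryGroup (Fin n) ℂ) →
        ∀ g : G, ∃ M : GL (Fin n) ℂ,
          (M : Matrix (Fin n) (Fin n) ℂ) ∈ Matrix.unitaryGroup (Fin n) ℂ ∧
            QuotientGroup.mk' (scalarSubgroup n) M = ρs g) := by
  classical
  rcases Nat.eq_zero_or_pos n with hn | npos
  · subst hn
    haveI hsub : Subsingleton (Matrix (Fin 0) (Fin 0) ℂ) :=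
      ⟨fun a b => by ext i j; exact i.elim0⟩
    haveI hsubGL : Subsingleton (GL (Fin 0) ℂ) := ⟨fun a b => Units.ext (Subsingleton.elim _ _)⟩
    haveI hsubQ : Subsingleton (GL (Fin 0) ℂ ⧸ scalarSubgroup 0) :=
      ⟨fun a b => by
        obtain ⟨x, rfl⟩ := QuotientGroup.mk_surjective a
        obtain ⟨y, rfl⟩ := QuotientGroup.mk_surjective b
        exact congrArg _ (Subsingleton.elim x y)⟩
    refine ⟨1, continuous_const, ?_, ?_, ?_⟩
    · intro g M _ h
      exact Subsingleton.elim _ _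
    · intro h
      exact Subsingleton.elim _ _
    · intro _ g
      refine ⟨1, ?_, Subsingleton.elim _ _⟩
      rw [Units.val_one]
      exact one_mem _
  · set q := QuotientGroup.mk' (scalarSubgroup n) with hq
    have hqcont : Continuous q := continuous_quot_mk
    set Mg : G → GL (Fin n) ℂ := fun g => (hGinv g).choose with hMgdef
    have hMgspec : ∀ g : G, ∀ h : H,
        (Mg g)⁻¹ * ρ h * Mg g = ρ (AuxPRL.conjH H g h) := fun g => (hGinv g).choose_spec
    have hItw : ∀ g : G, ∀ h : H,
        (ρ h : Matrix (Fin n) (Fin n) ℂ) * (Mg g : Matrix (Fin n) (Fin n) ℂ)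
          = (Mg g : Matrix (Fin n) (Fin n) ℂ)
            * (ρ (AuxPRL.conjH H g h) : Matrix (Fin n) (Fin n) ℂ) :=
      fun g => (AuxPRL.itw_iff ρ g (Mg g)).mp (hMgspec g)
    have huniq : ∀ (g : G) (M N : GL (Fin n) ℂ),
        (∀ h : H, (ρ h : Matrix (Fin n) (Fin n) ℂ) * (M : Matrix (Fin n) (Fin n) ℂ)
          = (M : Matrix (Fin n) (Fin n) ℂ)
            * (ρ (AuxPRL.conjH H g h) : Matrix (Fin n) (Fin n) ℂ)) →
        (∀ h : H, (ρ h : Matrix (Fin n) (Fin n) ℂ) * (N : Matrix (Fin n) (Fin n) ℂ)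
          = (N : Matrix (Fin n) (Fin n) ℂ)
            * (ρ (AuxPRL.conjH H g h) : Matrix (Fin n) (Fin n) ℂ)) →
        q N = q M :=
      fun g M N hM hNN => AuxPRL.coset_eq ρ hirr npos _ M N hM hNN
    set ρs : G →* GL (Fin n) ℂ ⧸ scalarSubgroup n := MonoidHom.mk' (fun g => q (Mg g)) (by
      intro g g'
      rw [← map_mul]
      refine huniq (g * g') (Mg g * Mg g') (Mg (g * g')) ?_ (hItw (g * g'))
      intro h
      rw [Units.val_mul, ← mul_assoc, hItw g h, AuxPRL.conjH_mul]
      rw [mul_assoc, hItw g' (AuxPRL.conjH H g h), mul_assoc]) with hρs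
    have hρsapp : ∀ g : G, ρs g = q (Mg g) := fun g => rfl
    have hprop1 : ∀ (g : G) (M : GL (Fin n) ℂ), q M = ρs g →
        ∀ h : H, M⁻¹ * ρ h * M = ρ (AuxPRL.conjH H g h) := by
      intro g M hqM h
      have hw : M⁻¹ * Mg g ∈ scalarSubgroup n := by
        rw [hρsapp, hq, QuotientGroup.mk'_apply, QuotientGroup.mk'_apply] at hqM
        exact QuotientGroup.eq.mp hqM
      have hMg_eq : Mg g = M * (M⁻¹ * Mg g) := by group
      have hc2 : (M⁻¹ * Mg g) * (M⁻¹ * ρ h * M) = (M⁻¹ * ρ h * M) * (M⁻¹ * Mg g) :=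
        AuxPRL.scalar_central _ hw _
      calc M⁻¹ * ρ h * M
          = (M⁻¹ * Mg g)⁻¹ * ((M⁻¹ * Mg g) * (M⁻¹ * ρ h * M)) := by group
        _ = (M⁻¹ * Mg g)⁻¹ * ((M⁻¹ * ρ h * M) * (M⁻¹ * Mg g)) := by rw [hc2]
        _ = (M * (M⁻¹ * Mg g))⁻¹ * ρ h * (M * (M⁻¹ * Mg g)) := by group
        _ = (Mg g)⁻¹ * ρ h * Mg g := by rw [← hMg_eq]
        _ = ρ (AuxPRL.conjH H g h) := hMgspec g h
    have hprop2 : ∀ h : H, ρs (h : G) = q (ρ h) := by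
      intro h
      refine huniq (h : G) (ρ h) (Mg (h : G)) ?_ (hItw (h : G))
      refine (AuxPRL.itw_iff ρ (h : G) (ρ h)).mp ?_
      intro k
      have hck : AuxPRL.conjH H (h : G) k = (h⁻¹ * k) * h := by
        apply Subtype.ext
        rfl
      rw [hck, map_mul, map_mul, map_inv]
    have hprop4 : (∀ h : H, (ρ h : Matrix (Fin n) (Fin n) ℂ) ∈ Matrix.unitaryGroup (Fin n) ℂ) →
        ∀ g : G, ∃ M : GL (Fin n) ℂ,
          (M : Matrix (Fin n) (Fin n) ℂ) ∈ Matrix.unitaryGroup (Fin n) ℂ ∧ q M = ρs g := by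
      intro hu g
      obtain ⟨M', hM'u, hM'c⟩ := AuxPRL.unitary_rep ρ hirr npos hu g (Mg g) (hItw g)
      exact ⟨M', hM'u, by rw [hM'c, hρsapp]⟩
    have hcont : Continuous ρs := by
      rw [continuous_def]
      intro V hV
      rw [isOpen_iff_forall_mem_open]
      intro g₀ hg₀
      have hUopen : IsOpen (⇑q ⁻¹' V) := hV.preimage hqcont
      set 𝒰 : Set (Matrix (Fin n) (Fin n) ℂ) :=
        (fun A : GL (Fin n) ℂ => (A : Matrix (Fin n) (Fin n) ℂ)) '' (⇑q ⁻¹' V) with hUdef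
      have h𝒰open : IsOpen 𝒰 := AuxPRL.isOpenMap_val _ hUopen
      set Sph : Set (Matrix (Fin n) (Fin n) ℂ) := {X | AuxPRL.Nm X = 1} with hSphdef
      set C : Set (Matrix (Fin n) (Fin n) ℂ × G) :=
        {p | AuxPRL.Nm p.1 = 1} ∩
          ({p | ∀ h : H, (ρ h : Matrix (Fin n) (Fin n) ℂ) * p.1
            = p.1 * (ρ (AuxPRL.conjH H p.2 h) : Matrix (Fin n) (Fin n) ℂ)} ∩
           {p | p.1 ∉ 𝒰}) with hCdef
      have hC1 : IsClosed {p : Matrix (Fin n) (Fin n) ℂ × G | AuxPRL.Nm p.1 = 1} :=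
        isClosed_eq (AuxPRL.continuous_Nm.comp continuous_fst) continuous_const
      have hC2 : IsClosed {p : Matrix (Fin n) (Fin n) ℂ × G | ∀ h : H,
          (ρ h : Matrix (Fin n) (Fin n) ℂ) * p.1
            = p.1 * (ρ (AuxPRL.conjH H p.2 h) : Matrix (Fin n) (Fin n) ℂ)} := by
        have heq : {p : Matrix (Fin n) (Fin n) ℂ × G | ∀ h : H,
            (ρ h : Matrix (Fin n) (Fin n) ℂ) * p.1
              = p.1 * (ρ (AuxPRL.conjH H p.2 h) : Matrix (Fin n) (Fin n) ℂ)}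
            = ⋂ h : H, {p : Matrix (Fin n) (Fin n) ℂ × G |
                (ρ h : Matrix (Fin n) (Fin n) ℂ) * p.1
                  = p.1 * (ρ (AuxPRL.conjH H p.2 h) : Matrix (Fin n) (Fin n) ℂ)} := by
          ext p
          simp only [Set.mem_setOf_eq, Set.mem_iInter]
        rw [heq]
        refine isClosed_iInter fun h => isClosed_eq (continuous_const.mul continuous_fst) ?_
        refine continuous_fst.mul ?_
        have hconj : Continuous fun p : Matrix (Fin n) (Fin n) ℂ × G =>
            (AuxPRL.conjH H p.2 h) := by
          apply Continuous.subtype_mk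
          exact (continuous_snd.inv.mul continuous_const).mul continuous_snd
        exact Units.continuous_val.comp (hρ.comp hconj)
      have hC3 : IsClosed {p : Matrix (Fin n) (Fin n) ℂ × G | p.1 ∉ 𝒰} :=
        (h𝒰open.isClosed_compl).preimage continuous_fst
      have hCclosed : IsClosed C := hC1.inter (hC2.inter hC3)
      have hPopen : IsOpen Cᶜ := hCclosed.isOpen_compl
      have hSP : Sph ×ˢ ({g₀} : Set G) ⊆ Cᶜ := by
        rintro ⟨X, g'⟩ ⟨hX, hgeq⟩
        rw [Set.mem_singleton_iff] at hgeq
        subst hgeq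
        intro hmem
        obtain ⟨h1, h2, h3⟩ := hmem
        have hX0 : X ≠ 0 := by
          intro h0
          rw [h0] at h1
          simp [AuxPRL.Nm] at h1
        have hXu : IsUnit X := AuxPRL.intertwiner_isUnit ρ hirr _ X hX0 h2
        obtain ⟨u, hu⟩ := hXu
        apply h3
        refine ⟨u, ?_, hu⟩
        show q u ∈ V
        have hqu : q u = q (Mg g') :=
          huniq g' (Mg g') u (hItw g') (fun h => by rw [hu]; exact h2 h)
        rw [hqu]
        exact hg₀
      obtain ⟨u, v, huo, hvo, hsu, htv, huv⟩ :=
        generalized_tube_lemma AuxPRL.isCompact_sphereNm isCompact_singleton hPopen hSP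
      refine ⟨v, ?_, hvo, htv rfl⟩
      intro g hgv
      show ρs g ∈ V
      set A : Matrix (Fin n) (Fin n) ℂ := (Mg g : Matrix (Fin n) (Fin n) ℂ) with hA
      have hA0 : A ≠ 0 := by
        intro h0
        have h1 : A * (((Mg g)⁻¹ : GL (Fin n) ℂ) : Matrix (Fin n) (Fin n) ℂ) = 1 := by
          rw [hA, ← Units.val_mul, mul_inv_cancel, Units.val_one]
        rw [h0, zero_mul] at h1
        exact AuxPRL.one_ne_zero_M npos h1.symm
      have hr : 0 < AuxPRL.Nm A := AuxPRL.Nm_pos hA0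
      set z : ℂ := ((AuxPRL.Nm A : ℝ) : ℂ)⁻¹ with hz
      set X : Matrix (Fin n) (Fin n) ℂ := z • A with hXdef
      have hX1 : AuxPRL.Nm X = 1 := by
        rw [hXdef, AuxPRL.Nm_smul, hz, norm_inv, Complex.norm_real, Real.norm_of_nonneg hr.le,
          inv_mul_cancel₀ (ne_of_gt hr)]
      have hX2 : ∀ h : H, (ρ h : Matrix (Fin n) (Fin n) ℂ) * X
          = X * (ρ (AuxPRL.conjH H g h) : Matrix (Fin n) (Fin n) ℂ) := by
        intro h
        rw [hXdef, mul_smul_comm, smul_mul_assoc, hItw g h]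
      have hmemuv : (X, g) ∈ u ×ˢ v := ⟨hsu hX1, hgv⟩
      have hPX := huv hmemuv
      have hXin : X ∈ 𝒰 := by
        by_contra h3
        exact hPX ⟨hX1, hX2, h3⟩
      obtain ⟨u', hu'V, hu'X⟩ := hXin
      have hu'X2 : (u' : Matrix (Fin n) (Fin n) ℂ) = X := hu'X
      have hqu : q u' = q (Mg g) :=
        huniq g (Mg g) u' (hItw g) (fun h => by rw [hu'X2]; exact hX2 h)
      rw [hρsapp, ← hqu]
      exact hu'V
    refine ⟨ρs, hcont, ?_, ?_, ?_⟩
    · intro g M hM h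
      exact hprop1 g M hM h
    · intro h
      exact hprop2 h
    · exact hprop4
end

section
/- Let G be a compact topological group, S a closed subgroup and H a closed normal subgroup of G such that G = SH (every element of G is a product of an element of S and an element of H). Then a continuous representation ρ: H → GL(n, ℂ) is extendible to G if and only if there exists a continuous homomorphism φ: S → GL(n, ℂ) such that (1) φ(x) = ρ(x) for all x ∈ S ∩ H, and (2) φ(s)⁻¹ ρ(h) φ(s) = ρ(s⁻¹ h s) for all s ∈ S and h ∈ H. -/
/-- **Lemma 3.1.** Let `G` be a compact topological group with `G = SH` for a closed
subgroup `S` and a closed normal subgroup `H`.  A continuous representation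
`ρ : H → GL(n, ℂ)` is extendible to `G` if and only if there is a continuous
homomorphism `φ : S → GL(n, ℂ)` with `φ = ρ` on `S ∩ H` and
`φ(s)⁻¹ ρ(h) φ(s) = ρ(s⁻¹ h s)` for all `s ∈ S`, `h ∈ H`. -/
theorem extendible_iff_exists_compatible_hom
    {G : Type*} [Group G] [TopologicalSpace G] [IsTopologicalGroup G] [CompactSpace G]
    [T2Space G]
    (S H : Subgroup G) [hN : H.Normal]
    (hScl : IsClosed (S : Set G)) (hHcl : IsClosed (H : Set G))
    (hSH : ∀ g : G, ∃ s ∈ S, ∃ h ∈ H, g = s * h)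
    {n : ℕ} (ρ : H →* GL (Fin n) ℂ) (hρ : Continuous ρ) :
    (∃ ρ' : G →* GL (Fin n) ℂ, Continuous ρ' ∧ ∀ h : H, ρ' (h : G) = ρ h) ↔
      (∃ φ : S →* GL (Fin n) ℂ, Continuous φ ∧
        (∀ (x : G) (hxS : x ∈ S) (hxH : x ∈ H), φ ⟨x, hxS⟩ = ρ ⟨x, hxH⟩) ∧
        (∀ (s : S) (h : H),
          (φ s)⁻¹ * ρ h * φ s =
            ρ ⟨(s : G)⁻¹ * (h : G) * (s : G), hN.conj_mem' (h : G) h.2 (s : G)⟩)) := by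
  constructor
  · rintro ⟨ρ', hc, hext⟩
    refine ⟨ρ'.comp S.subtype, hc.comp continuous_subtype_val, ?_, ?_⟩
    · intro x hxS hxH
      simpa using hext ⟨x, hxH⟩
    · intro s h
      have h1 : ρ h = ρ' (h : G) := (hext h).symm
      have h2 := hext ⟨(s : G)⁻¹ * (h : G) * (s : G), hN.conj_mem' (h : G) h.2 (s : G)⟩
      rw [h1]
      simp only [MonoidHom.comp_apply, Subgroup.coe_subtype]
      rw [← map_inv, ← map_mul, ← map_mul]
      exact h2
  · rintro ⟨φ, hφc, hφ1, hφ2⟩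
    have hSH' : ∀ g : G, ∃ p : S × H, g = (p.1 : G) * (p.2 : G) := by
      intro g
      obtain ⟨s, hs, h, hh, hg⟩ := hSH g
      exact ⟨(⟨s, hs⟩, ⟨h, hh⟩), hg⟩
    -- key well-definedness lemma
    have key : ∀ (s₁ s₂ : S) (h₁ h₂ : H), (s₁ : G) * h₁ = (s₂ : G) * h₂ →
        φ s₁ * ρ h₁ = φ s₂ * ρ h₂ := by
      intro s₁ s₂ h₁ h₂ heq
      have hx : ((s₂⁻¹ * s₁ : S) : G) = ((h₂ * h₁⁻¹ : H) : G) := by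
        push_cast
        calc (s₂ : G)⁻¹ * s₁ = (s₂ : G)⁻¹ * ((s₁ : G) * h₁) * (h₁ : G)⁻¹ := by group
          _ = (s₂ : G)⁻¹ * ((s₂ : G) * h₂) * (h₁ : G)⁻¹ := by rw [heq]
          _ = (h₂ : G) * (h₁ : G)⁻¹ := by group
      have hmemH : ((s₂⁻¹ * s₁ : S) : G) ∈ H := hx ▸ (h₂ * h₁⁻¹).2
      have e1 : φ (s₂⁻¹ * s₁) = ρ ⟨((s₂⁻¹ * s₁ : S) : G), hmemH⟩ :=
        hφ1 ((s₂⁻¹ * s₁ : S) : G) (s₂⁻¹ * s₁).2 hmemH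
      have e2 : (⟨((s₂⁻¹ * s₁ : S) : G), hmemH⟩ : H) = h₂ * h₁⁻¹ := Subtype.ext hx
      rw [e2] at e1
      have e3 : (φ s₂)⁻¹ * φ s₁ = ρ h₂ * (ρ h₁)⁻¹ := by
        rw [← map_inv, ← map_mul, e1, map_mul, map_inv]
      calc φ s₁ * ρ h₁ = φ s₂ * ((φ s₂)⁻¹ * φ s₁) * ρ h₁ := by group
        _ = φ s₂ * (ρ h₂ * (ρ h₁)⁻¹) * ρ h₁ := by rw [e3]
        _ = φ s₂ * ρ h₂ := by group
    set f : G → GL (Fin n) ℂ := fun g => φ (hSH' g).choose.1 * ρ (hSH' g).choose.2 with hf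
    have fspec : ∀ (g : G) (s : S) (h : H), g = (s : G) * h → f g = φ s * ρ h := by
      intro g s h hg
      have := (hSH' g).choose_spec
      exact key _ s _ h (by rw [← this, ← hg])
    have conj_mem : ∀ (s : S) (h : H), (s : G)⁻¹ * (h : G) * (s : G) ∈ H :=
      fun s h => hN.conj_mem' (h : G) h.2 (s : G)
    have fmul : ∀ a b : G, f (a * b) = f a * f b := by
      intro a b
      obtain ⟨⟨s₁, h₁⟩, ha⟩ := hSH' a
      obtain ⟨⟨s₂, h₂⟩, hb⟩ := hSH' b
      have fa : f a = φ s₁ * ρ h₁ := fspec a s₁ h₁ ha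
      have fb : f b = φ s₂ * ρ h₂ := fspec b s₂ h₂ hb
      set h₃ : H := (⟨(s₂ : G)⁻¹ * (h₁ : G) * (s₂ : G), conj_mem s₂ h₁⟩ : H) * h₂ with hh₃
      have hab : a * b = ((s₁ * s₂ : S) : G) * (h₃ : G) := by
        rw [ha, hb]
        push_cast [hh₃]
        group
      rw [fspec (a * b) (s₁ * s₂) h₃ hab, fa, fb, map_mul, map_mul, ← hφ2 s₂ h₁]
      group
    set ρ' : G →* GL (Fin n) ℂ :=
      { toFun := f
        map_one' := by
          rw [fspec 1 1 1 (by simp), map_one, map_one, one_mul]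
        map_mul' := fmul } with hρ'
    have hext : ∀ h : H, ρ' (h : G) = ρ h := by
      intro h
      show f (h : G) = ρ h
      rw [fspec (h : G) 1 h (by simp), map_one, one_mul]
    -- continuity via the quotient map S × H → G
    have : CompactSpace S := isCompact_iff_compactSpace.mp hScl.isCompact
    have : CompactSpace H := isCompact_iff_compactSpace.mp hHcl.isCompact
    set m : S × H → G := fun p => (p.1 : G) * (p.2 : G) with hm
    have hmc : Continuous m :=
      (continuous_subtype_val.comp continuous_fst).mul
        (continuous_subtype_val.comp continuous_snd)
    have hmsurj : Function.Surjective m := by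
      intro g
      obtain ⟨p, hp⟩ := hSH' g
      exact ⟨p, hp.symm⟩
    have hq : Topology.IsQuotientMap m := (hmc.isClosedMap).isQuotientMap hmc hmsurj
    have hcomp : (ρ' ∘ m) = fun p : S × H => φ p.1 * ρ p.2 := by
      funext p
      exact fspec _ p.1 p.2 rfl
    have hcont : Continuous ρ' := by
      rw [hq.continuous_iff, hcomp]
      exact (hφc.comp continuous_fst).mul (hρ.comp continuous_snd)
    exact ⟨ρ', hcont, hext⟩
end

section
/- Let G be a compact Lie group, H a closed normal subgroup, and S a semisimple connected closed normal subgroup of G such that G = SH and the map S × H → G, (s, h) ↦ sh, is a group homomorphism (equivalently, every element of S commutes with every element of H). Then a continuous irreducible complex representation ρ: H → GL(n, ℂ) is extendible to G if and only if ρ is trivial on S ∩ H, i.e., ρ(g) = I for all g ∈ S ∩ H. -/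
/-- Schur's lemma, matrix form: a matrix commuting with all the matrices of an
irreducible representation is a scalar matrix. -/
private lemma schur_scalar_aux {n : ℕ} (hn : 0 < n) {Hgrp : Type*} [Group Hgrp]
    (ρ : Hgrp →* GL (Fin n) ℂ)
    (hirr : ∀ W : Submodule ℂ (Fin n → ℂ),
      (∀ (h : Hgrp), ∀ v ∈ W, (ρ h : Matrix (Fin n) (Fin n) ℂ).mulVec v ∈ W) → W = ⊥ ∨ W = ⊤)
    (T : Matrix (Fin n) (Fin n) ℂ)
    (hT : ∀ h : Hgrp, T * (ρ h : Matrix (Fin n) (Fin n) ℂ)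
      = (ρ h : Matrix (Fin n) (Fin n) ℂ) * T) :
    ∃ c : ℂ, T = c • (1 : Matrix (Fin n) (Fin n) ℂ) := by
  haveI : Nonempty (Fin n) := ⟨⟨0, hn⟩⟩
  haveI : Nontrivial (Fin n → ℂ) := inferInstance
  obtain ⟨c, hc⟩ := Module.End.exists_eigenvalue (Matrix.mulVecLin T)
  refine ⟨c, ?_⟩
  set W := Module.End.eigenspace (Matrix.mulVecLin T) c with hW
  have hWne : W ≠ ⊥ := hc
  have hinv : ∀ (h : Hgrp), ∀ v ∈ W, ((ρ h : Matrix (Fin n) (Fin n) ℂ)).mulVec v ∈ W := by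
    intro h v hv
    rw [hW, Module.End.mem_eigenspace_iff] at hv ⊢
    rw [Matrix.mulVecLin_apply] at hv ⊢
    rw [Matrix.mulVec_mulVec, hT h, ← Matrix.mulVec_mulVec, hv, Matrix.mulVec_smul]
  have hWtop : W = ⊤ := (hirr W hinv).resolve_left hWne
  have hall : ∀ v : Fin n → ℂ, T.mulVec v = c • v := by
    intro v
    have hv : v ∈ W := hWtop ▸ Submodule.mem_top
    rw [hW, Module.End.mem_eigenspace_iff, Matrix.mulVecLin_apply] at hv
    exact hv
  apply Matrix.toLin'.injective
  apply LinearMap.ext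
  intro v
  rw [Matrix.toLin'_apply, Matrix.toLin'_apply, hall v, Matrix.smul_mulVec,
    Matrix.one_mulVec]

/-- **Proposition 4.3.** Let `G` be a compact Lie group, `H` a closed normal
subgroup, and `S` a semisimple connected closed normal subgroup of `G` such that
`G = SH` and `S` commutes with `H` elementwise.  A continuous irreducible complex
representation `ρ` of `H` is extendible to `G` if and only if `ρ` is trivial on
`S ∩ H`. -/
theorem irreducible_extendible_iff_trivial_on_inter
    {E : Type*} [NormedAddCommGroup E] [NormedSpace ℝ E] [FiniteDimensional ℝ E]
    {HM : Type*} [TopologicalSpace HM] {I : ModelWithCorners ℝ E HM}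
    {G : Type*} [Group G] [TopologicalSpace G] [T2Space G] [ChartedSpace HM G]
    [LieGroup I (⊤ : ℕ∞) G] [IsTopologicalGroup G] [CompactSpace G]
    (H S : Subgroup G) [H.Normal] [S.Normal]
    (hHclosed : IsClosed (H : Set G)) (hSclosed : IsClosed (S : Set G))
    (hSconn : IsConnected (S : Set G)) (hSss : commutator ↥S = ⊤)
    (hSH : ∀ g : G, ∃ s ∈ S, ∃ h ∈ H, g = s * h)
    (hcomm : ∀ s ∈ S, ∀ h ∈ H, s * h = h * s)
    {n : ℕ} (ρ : H →* GL (Fin n) ℂ) (hρ : Continuous ρ)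
    (hirr : ∀ W : Submodule ℂ (Fin n → ℂ),
      (∀ (h : H), ∀ v ∈ W, (ρ h : Matrix (Fin n) (Fin n) ℂ).mulVec v ∈ W) → W = ⊥ ∨ W = ⊤) :
    (∃ ρ' : G →* GL (Fin n) ℂ, Continuous ρ' ∧ ∀ h : H, ρ' (h : G) = ρ h) ↔
      (∀ (g : G) (hgS : g ∈ S) (hgH : g ∈ H), ρ ⟨g, hgH⟩ = 1) := by
  rcases Nat.eq_zero_or_pos n with hn | hn
  · -- trivial case `n = 0`
    subst hn
    haveI : Subsingleton (Matrix (Fin 0) (Fin 0) ℂ) := by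
      constructor; intro a b; ext i j; exact absurd i.2 (Nat.not_lt_zero _)
    haveI : Subsingleton (GL (Fin 0) ℂ) := ⟨fun a b => Units.ext (Subsingleton.elim _ _)⟩
    constructor
    · intro _ g hgS hgH; exact Subsingleton.elim _ _
    · intro _
      exact ⟨1, continuous_const, fun h => Subsingleton.elim _ _⟩
  constructor
  · -- forward direction: an extension is trivial on `S`, hence on `S ∩ H`.
    rintro ⟨ρ', hρ'cont, hρ'ext⟩ g hgS hgH
    -- each `ρ' s`, `s ∈ S`, commutes with the whole representation `ρ`
    have hscalar : ∀ s ∈ S, ∃ c : ℂ, (ρ' s : Matrix (Fin n) (Fin n) ℂ)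
        = c • (1 : Matrix (Fin n) (Fin n) ℂ) := by
      intro s hs
      apply schur_scalar_aux hn ρ hirr
      intro h
      have hc : s * (h : G) = (h : G) * s := hcomm s hs h h.2
      have : ρ' s * ρ' (h : G) = ρ' (h : G) * ρ' s := by
        rw [← map_mul, ← map_mul, hc]
      rw [hρ'ext h] at this
      have := congrArg Units.val this
      simpa [Units.val_mul] using this
    -- hence the restriction of `ρ'` to `S` has commutative image
    set φ : ↥S →* GL (Fin n) ℂ := ρ'.comp S.subtype with hφ
    have hφcomm : ∀ x y : ↥S, Commute (φ x) (φ y) := by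
      intro x y
      obtain ⟨c, hcx⟩ := hscalar x x.2
      obtain ⟨d, hdy⟩ := hscalar y y.2
      have : (φ x : Matrix (Fin n) (Fin n) ℂ) * (φ y : Matrix (Fin n) (Fin n) ℂ)
          = (φ y : Matrix (Fin n) (Fin n) ℂ) * (φ x : Matrix (Fin n) (Fin n) ℂ) := by
        simp only [hφ, MonoidHom.coe_comp, Function.comp_apply, Subgroup.coe_subtype] at *
        rw [hcx, hdy]
        simp only [smul_mul_assoc, mul_smul_comm, one_mul, mul_one]
        exact (smul_comm c d (1 : Matrix (Fin n) (Fin n) ℂ)).symm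
      exact Units.ext (by simpa [Units.val_mul] using this)
    -- semisimplicity : `S = [S,S]`, so `φ` is trivial
    have hker : ∀ x : ↥S, φ x = 1 := by
      have hle : commutator ↥S ≤ φ.ker := by
        rw [commutator, Subgroup.commutator_le]
        intro a _ b _
        rw [MonoidHom.mem_ker, map_commutatorElement]
        exact commutatorElement_eq_one_iff_commute.mpr (hφcomm a b)
      intro x
      have : x ∈ φ.ker := hle (hSss ▸ Subgroup.mem_top x)
      exact this
    have h1 : ρ' g = 1 := hker ⟨g, hgS⟩
    have h2 : ρ' g = ρ ⟨g, hgH⟩ := hρ'ext ⟨g, hgH⟩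
    rw [← h2, h1]
  · -- reverse direction: construct the extension
    intro htriv
    choose sf hsf hf hhf heq using hSH
    -- well-definedness
    have key : ∀ (s₁ h₁ s₂ h₂ : G) (_ : s₁ ∈ S) (hh₁ : h₁ ∈ H) (_ : s₂ ∈ S) (hh₂ : h₂ ∈ H),
        s₁ * h₁ = s₂ * h₂ → ρ ⟨h₁, hh₁⟩ = ρ ⟨h₂, hh₂⟩ := by
      intro s₁ h₁ s₂ h₂ hs₁ hh₁ hs₂ hh₂ hEq
      have hS' : h₁ * h₂⁻¹ ∈ S := by
        have h' : h₁ = s₁⁻¹ * (s₂ * h₂) := by rw [← hEq]; group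
        have h'' : h₁ * h₂⁻¹ = s₁⁻¹ * s₂ := by rw [h']; group
        rw [h'']
        exact S.mul_mem (S.inv_mem hs₁) hs₂
      have hH' : h₁ * h₂⁻¹ ∈ H := H.mul_mem hh₁ (H.inv_mem hh₂)
      have h1 : ρ ⟨h₁ * h₂⁻¹, hH'⟩ = 1 := htriv _ hS' hH'
      have : (⟨h₁, hh₁⟩ : H) = ⟨h₁ * h₂⁻¹, hH'⟩ * ⟨h₂, hh₂⟩ := by
        ext; simp [mul_assoc]
      rw [this, map_mul, h1, one_mul]
    set f : G → GL (Fin n) ℂ := fun g => ρ ⟨hf g, hhf g⟩ with hfdef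
    have fval : ∀ (g s h : G) (hs : s ∈ S) (hh : h ∈ H), g = s * h → f g = ρ ⟨h, hh⟩ := by
      intro g s h hs hh hgsh
      exact key _ _ _ _ (hsf g) (hhf g) hs hh (by rw [← heq g, hgsh])
    have fmul : ∀ g₁ g₂ : G, f (g₁ * g₂) = f g₁ * f g₂ := by
      intro g₁ g₂
      have hdec : g₁ * g₂ = (sf g₁ * sf g₂) * (hf g₁ * hf g₂) := by
        have hc : hf g₁ * sf g₂ = sf g₂ * hf g₁ := (hcomm _ (hsf g₂) _ (hhf g₁)).symm
        calc g₁ * g₂ = sf g₁ * hf g₁ * (sf g₂ * hf g₂) := by rw [← heq g₁, ← heq g₂]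
          _ = sf g₁ * (hf g₁ * sf g₂) * hf g₂ := by group
          _ = sf g₁ * (sf g₂ * hf g₁) * hf g₂ := by rw [hc]
          _ = (sf g₁ * sf g₂) * (hf g₁ * hf g₂) := by group
      have := fval (g₁ * g₂) _ _ (S.mul_mem (hsf g₁) (hsf g₂))
        (H.mul_mem (hhf g₁) (hhf g₂)) hdec
      rw [this]
      have : (⟨hf g₁ * hf g₂, H.mul_mem (hhf g₁) (hhf g₂)⟩ : H)
          = ⟨hf g₁, hhf g₁⟩ * ⟨hf g₂, hhf g₂⟩ := rfl
      rw [this, map_mul]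
    set ρ' : G →* GL (Fin n) ℂ := MonoidHom.mk' f fmul with hρ'def
    have hext : ∀ h : H, ρ' (h : G) = ρ h := by
      intro h
      have := fval (h : G) 1 (h : G) S.one_mem h.2 (by rw [one_mul])
      simpa [hρ'def] using this
    -- `S` is contained in the kernel
    have hkerS : ∀ s ∈ S, ρ' s = 1 := by
      intro s hs
      have h1 := fval s s 1 hs H.one_mem (by rw [mul_one])
      have h2 : ρ (⟨1, H.one_mem⟩ : H) = 1 := by
        rw [show (⟨1, H.one_mem⟩ : H) = 1 from rfl, map_one]
      rw [h2] at h1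
      simpa [hρ'def] using h1
    -- continuity
    have hSle : S ≤ ρ'.ker := fun s hs => hkerS s hs
    set ψ : G ⧸ S →* GL (Fin n) ℂ := QuotientGroup.lift S ρ' hSle with hψdef
    haveI : IsClosed ((S : Subgroup G) : Set G) := hSclosed
    haveI : T2Space (G ⧸ S) := inferInstance
    haveI : CompactSpace ↥H := isCompact_iff_compactSpace.mp
      (hHclosed.isCompact)
    set q : ↥H → G ⧸ S := fun x => QuotientGroup.mk (x : G) with hqdef
    have hqcont : Continuous q := QuotientGroup.continuous_mk.comp continuous_subtype_val
    have hqsurj : Function.Surjective q := by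
      intro x
      obtain ⟨g, rfl⟩ := QuotientGroup.mk_surjective x
      refine ⟨⟨hf g, hhf g⟩, ?_⟩
      rw [hqdef]
      show QuotientGroup.mk (hf g : G) = QuotientGroup.mk g
      rw [QuotientGroup.eq]
      have : (hf g)⁻¹ * g = (hf g)⁻¹ * sf g * hf g := by
        rw [mul_assoc, ← heq g]
      rw [this]
      have : (hf g)⁻¹ * sf g * hf g ∈ S :=
        Subgroup.Normal.conj_mem' ‹S.Normal› _ (hsf g) _
      exact this
    have hqm := (hqcont.isClosedMap).isQuotientMap hqcont hqsurj
    have hψcont : Continuous ψ := by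
      rw [hqm.continuous_iff]
      have : (ψ ∘ q) = fun x : ↥H => ρ x := by
        funext x
        show ψ (QuotientGroup.mk (x : G)) = ρ x
        rw [hψdef, QuotientGroup.lift_mk]
        exact hext x
      rw [this]
      exact hρ
    have hρ'cont : Continuous ρ' := by
      have : (ρ' : G → GL (Fin n) ℂ) = ψ ∘ (QuotientGroup.mk : G → G ⧸ S) := by
        funext g
        show ρ' g = ψ (QuotientGroup.mk g)
        rw [hψdef, QuotientGroup.lift_mk]
      rw [this]
      exact hψcont.comp QuotientGroup.continuous_mk
    exact ⟨ρ', hρ'cont, hext⟩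
end

section
/- Let G be a compact Lie group and H a closed normal subgroup of G such that the quotient group G/H is connected. Then every finite-dimensional complex representation ρ: H → GL(n, ℂ) is G-invariant: for every g ∈ G there exists a matrix M ∈ GL(n, ℂ) such that M⁻¹ ρ(h) M = ρ(g⁻¹ h g) for all h ∈ H. -/
open MeasureTheory Topology Set

attribute [local instance] Matrix.normedAddCommGroup Matrix.normedSpace

noncomputable instance matrixContinuousENorm {m k : Type*} [Fintype m] [Fintype k] :
    ContinuousENorm (Matrix m k ℂ) :=
  inferInstanceAs (ContinuousENorm (m → k → ℂ))

/-- If `G` is a compact Lie group and `H` a closed normal subgroup with `G/H`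
connected, then every finite-dimensional complex representation `ρ` of `H` is
`G`-invariant: each conjugate representation `ᵍρ` is isomorphic to `ρ`. -/
theorem representation_G_invariant_of_quotient_connected
    {E : Type*} [NormedAddCommGroup E] [NormedSpace ℝ E] [FiniteDimensional ℝ E]
    {HM : Type*} [TopologicalSpace HM] {I : ModelWithCorners ℝ E HM}
    {G : Type*} [Group G] [TopologicalSpace G] [T2Space G] [ChartedSpace HM G]
    [LieGroup I (⊤ : ℕ∞) G] [IsTopologicalGroup G] [CompactSpace G]
    (H : Subgroup G) [hN : H.Normal] (hHclosed : IsClosed (H : Set G))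
    (hconn : ConnectedSpace (G ⧸ H))
    {n : ℕ} (ρ : H →* GL (Fin n) ℂ) (hρ : Continuous ρ) :
    ∀ g : G, ∃ M : GL (Fin n) ℂ, ∀ h : H,
      M⁻¹ * ρ h * M = ρ ⟨g⁻¹ * (h : G) * g, hN.conj_mem' (h : G) h.2 g⟩ := by
  classical
  -- the conjugation action of `G` on `H`
  let c : G → H → H := fun g h => ⟨g⁻¹ * (h : G) * g, hN.conj_mem' (h : G) h.2 g⟩
  have hc_one : ∀ h : H, c 1 h = h := by
    intro h; apply Subtype.ext; simp [c]
  have hc_mul : ∀ (g : G) (h k : H), c g (h * k) = c g h * c g k := by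
    intro g h k; apply Subtype.ext; simp [c]; group
  have hc_inv : ∀ (g : G) (h : H), c g h⁻¹ = (c g h)⁻¹ := by
    intro g h; apply Subtype.ext; simp [c]; group
  have hc_comp : ∀ (g₁ g₂ : G) (h : H), c (g₁ * g₂) h = c g₂ (c g₁ h) := by
    intro g₁ g₂ h; apply Subtype.ext; simp [c]; group
  have hc_cancel : ∀ (g : G) (h : H), c g (c g⁻¹ h) = h := by
    intro g h; apply Subtype.ext; simp [c]; group
  -- the property of being `G`-invariant at `g`
  set P : G → Prop := fun g => ∃ M : GL (Fin n) ℂ, ∀ h : H,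
      M⁻¹ * ρ h * M = ρ (c g h) with hPdef
  suffices hPall : ∀ g, P g by exact hPall
  -- `P` is closed under the group operations
  have hP1 : P 1 := ⟨1, fun h => by rw [hc_one]; simp⟩
  have hPmul : ∀ g₁ g₂, P g₁ → P g₂ → P (g₁ * g₂) := by
    rintro g₁ g₂ ⟨M₁, h₁⟩ ⟨M₂, h₂⟩
    refine ⟨M₁ * M₂, fun h => ?_⟩
    rw [hc_comp, ← h₂ (c g₁ h), ← h₁ h]
    group
  have hPinv : ∀ g, P g → P g⁻¹ := by
    rintro g ⟨M, hM⟩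
    refine ⟨M⁻¹, fun h => ?_⟩
    have key := hM (c g⁻¹ h)
    rw [hc_cancel] at key
    rw [← key]; group
  have hPH : ∀ h₀ : H, P (h₀ : G) := by
    intro h₀
    refine ⟨ρ h₀, fun h => ?_⟩
    have hch : c (h₀ : G) h = h₀⁻¹ * h * h₀ := by
      apply Subtype.ext; simp [c]
    rw [hch, map_mul, map_mul, map_inv]
  -- instances on the compact group `H`
  haveI : CompactSpace H := isCompact_iff_compactSpace.mp hHclosed.isCompact
  haveI : Nonempty H := ⟨1⟩
  letI : MeasurableSpace H := borel H
  haveI : BorelSpace H := ⟨rfl⟩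
  letI μ : Measure H := Measure.haarMeasure ⊤
  haveI : IsProbabilityMeasure μ :=
    ⟨by simpa [TopologicalSpace.PositiveCompacts.coe_top] using
      (Measure.haarMeasure_self (K₀ := (⊤ : TopologicalSpace.PositiveCompacts H)))⟩
  -- the averaged intertwiner
  have hccont : Continuous fun p : G × H => c p.1 p.2 := by
    apply Continuous.subtype_mk
    exact ((continuous_fst.inv).mul
      (continuous_subtype_val.comp continuous_snd)).mul continuous_fst
  set Φ : G → H → Matrix (Fin n) (Fin n) ℂ :=
    fun g h => ((ρ h : GL (Fin n) ℂ) : Matrix (Fin n) (Fin n) ℂ) *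
      (((ρ (c g h))⁻¹ : GL (Fin n) ℂ) : Matrix (Fin n) (Fin n) ℂ) with hΦdef
  have hΦ : Continuous fun p : G × H => Φ p.1 p.2 := by
    apply Continuous.mul
    · exact Units.continuous_val.comp (hρ.comp continuous_snd)
    · exact (Units.continuous_coe_inv.comp hρ).comp hccont
  have hΦint : ∀ g : G, Integrable (Φ g) μ := by
    intro g
    have : Continuous (Φ g) := hΦ.comp (Continuous.prodMk_right g)
    exact integrableOn_univ.mp (this.continuousOn.integrableOn_compact isCompact_univ)
  set T : G → Matrix (Fin n) (Fin n) ℂ := fun g => ∫ h, Φ g h ∂μ with hTdef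
  -- continuity of `T`
  haveI : TopologicalSpace.MetrizableSpace G := Manifold.metrizableSpace I G
  have hTcont : Continuous T := by
    have h2 := continuous_parametric_integral_of_continuous (μ := μ) (f := Φ) hΦ isCompact_univ
    simp only [Measure.restrict_univ] at h2
    exact h2
  have hT1 : T 1 = 1 := by
    have hΦ1 : ∀ h : H, Φ 1 h = 1 := by
      intro h; rw [hΦdef]; simp only [hc_one]
      rw [← Units.val_mul, mul_inv_cancel, Units.val_one]
    simp [hTdef, hΦ1]
  -- pulling constants out of the integral
  have hpull_left : ∀ (A : Matrix (Fin n) (Fin n) ℂ) (f : H → Matrix (Fin n) (Fin n) ℂ),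
      Integrable f μ → ∫ h, A * f h ∂μ = A * ∫ h, f h ∂μ := by
    intro A f hf
    exact ((LinearMap.mulLeft ℝ A).toContinuousLinearMap).integral_comp_comm hf
  have hpull_right : ∀ (A : Matrix (Fin n) (Fin n) ℂ) (f : H → Matrix (Fin n) (Fin n) ℂ),
      Integrable f μ → ∫ h, f h * A ∂μ = (∫ h, f h ∂μ) * A := by
    intro A f hf
    exact ((LinearMap.mulRight ℝ A).toContinuousLinearMap).integral_comp_comm hf
  -- the intertwining identity
  have hkey : ∀ (g : G) (k : H),
      ((ρ k : GL (Fin n) ℂ) : Matrix (Fin n) (Fin n) ℂ) * T g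
        = T g * ((ρ (c g k) : GL (Fin n) ℂ) : Matrix (Fin n) (Fin n) ℂ) := by
    intro g k
    have h1 : ∀ h : H,
        ((ρ k : GL (Fin n) ℂ) : Matrix (Fin n) (Fin n) ℂ) * Φ g (k⁻¹ * h)
          = Φ g h * ((ρ (c g k) : GL (Fin n) ℂ) : Matrix (Fin n) (Fin n) ℂ) := by
      intro h
      have e1 : ((ρ k : GL (Fin n) ℂ) : Matrix (Fin n) (Fin n) ℂ) *
          ((ρ (k⁻¹ * h) : GL (Fin n) ℂ) : Matrix (Fin n) (Fin n) ℂ)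
          = ((ρ h : GL (Fin n) ℂ) : Matrix (Fin n) (Fin n) ℂ) := by
        rw [← Units.val_mul, ← map_mul, mul_inv_cancel_left]
      have e2 : (((ρ (c g (k⁻¹ * h)))⁻¹ : GL (Fin n) ℂ) : Matrix (Fin n) (Fin n) ℂ)
          = (((ρ (c g h))⁻¹ : GL (Fin n) ℂ) : Matrix (Fin n) (Fin n) ℂ) *
            ((ρ (c g k) : GL (Fin n) ℂ) : Matrix (Fin n) (Fin n) ℂ) := by
        rw [hc_mul, hc_inv, map_mul, map_inv, mul_inv_rev, inv_inv, Units.val_mul]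
      calc ((ρ k : GL (Fin n) ℂ) : Matrix (Fin n) (Fin n) ℂ) * Φ g (k⁻¹ * h)
          = (((ρ k : GL (Fin n) ℂ) : Matrix (Fin n) (Fin n) ℂ) *
              ((ρ (k⁻¹ * h) : GL (Fin n) ℂ) : Matrix (Fin n) (Fin n) ℂ)) *
              (((ρ (c g (k⁻¹ * h)))⁻¹ : GL (Fin n) ℂ) : Matrix (Fin n) (Fin n) ℂ) := by
            rw [hΦdef]; rw [mul_assoc]
        _ = ((ρ h : GL (Fin n) ℂ) : Matrix (Fin n) (Fin n) ℂ) *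
              ((((ρ (c g h))⁻¹ : GL (Fin n) ℂ) : Matrix (Fin n) (Fin n) ℂ) *
              ((ρ (c g k) : GL (Fin n) ℂ) : Matrix (Fin n) (Fin n) ℂ)) := by
            rw [e1, e2]
        _ = Φ g h * ((ρ (c g k) : GL (Fin n) ℂ) : Matrix (Fin n) (Fin n) ℂ) := by
            rw [hΦdef, mul_assoc]
    have hshift : ∫ h, Φ g (k⁻¹ * h) ∂μ = T g := by
      rw [hTdef]
      exact integral_mul_left_eq_self (fun h => Φ g h) k⁻¹
    have hintshift : Integrable (fun h => Φ g (k⁻¹ * h)) μ := by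
      have : Continuous fun h : H => Φ g (k⁻¹ * h) :=
        (hΦ.comp (Continuous.prodMk_right g)).comp (continuous_const.mul continuous_id)
      exact integrableOn_univ.mp (this.continuousOn.integrableOn_compact isCompact_univ)
    calc ((ρ k : GL (Fin n) ℂ) : Matrix (Fin n) (Fin n) ℂ) * T g
        = ((ρ k : GL (Fin n) ℂ) : Matrix (Fin n) (Fin n) ℂ) * ∫ h, Φ g (k⁻¹ * h) ∂μ := by
          rw [hshift]
      _ = ∫ h, ((ρ k : GL (Fin n) ℂ) : Matrix (Fin n) (Fin n) ℂ) * Φ g (k⁻¹ * h) ∂μ :=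
          (hpull_left _ _ hintshift).symm
      _ = ∫ h, Φ g h * ((ρ (c g k) : GL (Fin n) ℂ) : Matrix (Fin n) (Fin n) ℂ) ∂μ := by
          simp only [h1]
      _ = T g * ((ρ (c g k) : GL (Fin n) ℂ) : Matrix (Fin n) (Fin n) ℂ) :=
          hpull_right _ _ (hΦint g)
  -- the set where `T` is invertible is an open neighbourhood of `1` contained in `{P}`
  set V : Set G := {g : G | IsUnit (T g)} with hVdef
  have hVopen : IsOpen V := by
    have hVeq : V = (fun g => (T g).det) ⁻¹' ({0}ᶜ) := by
      ext g
      simp [hVdef, Matrix.isUnit_iff_isUnit_det, isUnit_iff_ne_zero]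
    rw [hVeq]
    exact isOpen_compl_singleton.preimage hTcont.matrix_det
  have hV1 : (1 : G) ∈ V := by simp [hVdef, hT1]
  have hVP : ∀ g ∈ V, P g := by
    intro g hg
    refine ⟨hg.unit, fun h => ?_⟩
    have key : ρ h * hg.unit = hg.unit * ρ (c g h) := by
      apply Units.ext
      simpa [Units.val_mul, IsUnit.unit_spec] using hkey g h
    calc hg.unit⁻¹ * ρ h * hg.unit = hg.unit⁻¹ * (ρ h * hg.unit) := by rw [mul_assoc]
      _ = hg.unit⁻¹ * (hg.unit * ρ (c g h)) := by rw [key]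
      _ = ρ (c g h) := by rw [inv_mul_cancel_left]
  -- `S = {g | P g}` is a clopen subgroup-like set
  set S : Set G := {g | P g} with hSdef
  have hSopen : IsOpen S := by
    rw [isOpen_iff_forall_mem_open]
    intro s hs
    refine ⟨(fun x => s⁻¹ * x) ⁻¹' V, ?_, (hVopen.preimage (continuous_const.mul continuous_id)), ?_⟩
    · intro x hx
      have hx' : P (s⁻¹ * x) := hVP _ hx
      have : P (s * (s⁻¹ * x)) := hPmul _ _ hs hx'
      simpa [hSdef] using this
    · simpa using hV1
  have hSclosed : IsClosed S := by
    rw [← isOpen_compl_iff, isOpen_iff_forall_mem_open]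
    intro s hs
    refine ⟨(fun x => s⁻¹ * x) ⁻¹' V, ?_, (hVopen.preimage (continuous_const.mul continuous_id)), ?_⟩
    · intro x hx
      intro hxS
      apply hs
      have hx' : P (s⁻¹ * x) := hVP _ hx
      have : P (x * (s⁻¹ * x)⁻¹) := hPmul _ _ hxS (hPinv _ hx')
      simpa [hSdef, mul_assoc] using this
    · simpa using hV1
  -- push to the connected quotient
  have hsat : (QuotientGroup.mk : G → G ⧸ H) ⁻¹' ((QuotientGroup.mk : G → G ⧸ H) '' S) = S := by
    ext x
    constructor
    · rintro ⟨s, hs, hsx⟩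
      have hmem : s⁻¹ * x ∈ H := QuotientGroup.eq.mp hsx
      have : P (s * (s⁻¹ * x)) := hPmul _ _ hs (hPH ⟨s⁻¹ * x, hmem⟩)
      simpa [hSdef] using this
    · intro hx
      exact ⟨x, hx, rfl⟩
  have hπopen : IsOpen ((QuotientGroup.mk : G → G ⧸ H) '' S) :=
    QuotientGroup.isOpenMap_coe S hSopen
  have hπclosed : IsClosed ((QuotientGroup.mk : G → G ⧸ H) '' S) := by
    rw [← (QuotientGroup.isOpenQuotientMap_mk (N := H)).isQuotientMap.isClosed_preimage, hsat]
    exact hSclosed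
  have hπuniv : (QuotientGroup.mk : G → G ⧸ H) '' S = univ := by
    rcases isClopen_iff.mp ⟨hπclosed, hπopen⟩ with h | h
    · exfalso
      have : (QuotientGroup.mk (1 : G) : G ⧸ H) ∈ (QuotientGroup.mk : G → G ⧸ H) '' S :=
        ⟨1, hP1, rfl⟩
      rw [h] at this
      exact this
    · exact h
  intro g
  have : g ∈ (QuotientGroup.mk : G → G ⧸ H) ⁻¹' ((QuotientGroup.mk : G → G ⧸ H) '' S) := by
    rw [hπuniv]; trivial
  rw [hsat] at this
  exact this
end
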